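/- Let P, Q be one-variable Laurent polynomials and p prime. Suppose p | ct(P^{n_0}) for some n_0, and suppose s ∈ ℕ satisfies that Λ_p applied s times to any Laurent polynomial of degree ≤ max(deg P − 1, deg Q) yields its constant term. Then for every n whose base-p digit string contains the block 0^s (n_0)_p 0^s (the base-p digits of n_0 padded by s zeros on both sides) as a contiguous substring, ct(P^n Q) ≡ 0 (mod p). -/

import Mathlib

open scoped Classical

/-- `Λ_p`: delete terms whose exponent is not divisible by `p` and substitute `x^p ↦ x`. -/
noncomputable def lam {R : Type*} [Semiring R] (p : ℕ) (hp : p ≠ 0) (Q : LaurentPolynomial R) :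
    LaurentPolynomial R :=
  AddMonoidAlgebra.ofCoeff (Finsupp.comapDomain (fun i : ℤ => (p : ℤ) * i) Q.coeff
    ((mul_right_injective₀ (Int.natCast_ne_zero.mpr hp)).injOn))

/-- `substPow p Q = Q(x^p)`. -/
noncomputable def substPow {R : Type*} [Semiring R] (p : ℕ) (Q : LaurentPolynomial R) :
    LaurentPolynomial R :=
  AddMonoidAlgebra.ofCoeff (Finsupp.mapDomain (fun i : ℤ => (p : ℤ) * i) Q.coeff)

/-- The largest absolute value of an exponent with nonzero coefficient (`0` for `Q = 0`). -/
noncomputable def ldeg {R : Type*} [Semiring R] (Q : LaurentPolynomial R) : ℕ :=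
  Q.coeff.support.sup fun i => i.natAbs

section basics
variable {R : Type*} [Semiring R] {p : ℕ}

lemma pinj (hp : p ≠ 0) : Function.Injective (fun i : ℤ => (p : ℤ) * i) :=
  mul_right_injective₀ (Int.natCast_ne_zero.mpr hp)

lemma lam_apply (hp : p ≠ 0) (X : LaurentPolynomial R) (i : ℤ) :
    (lam p hp X).coeff i = X.coeff ((p:ℤ) * i) := rfl

lemma substPow_apply_mul (hp : p ≠ 0) (X : LaurentPolynomial R) (i : ℤ) :
    (substPow p X).coeff ((p:ℤ) * i) = X.coeff i :=
  Finsupp.mapDomain_apply (pinj hp) X.coeff i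

lemma substPow_apply_notdvd (X : LaurentPolynomial R) {i : ℤ} (h : ¬ (p:ℤ) ∣ i) :
    (substPow p X).coeff i = 0 := by
  show Finsupp.mapDomain _ X.coeff i = 0
  apply Finsupp.mapDomain_notin_range
  rintro ⟨j, rfl⟩
  exact h ⟨j, rfl⟩

lemma lam_substPow (hp : p ≠ 0) (X : LaurentPolynomial R) : lam p hp (substPow p X) = X := by
  ext i
  rw [lam_apply, substPow_apply_mul hp]

lemma lam_add (hp : p ≠ 0) (X Y : LaurentPolynomial R) :
    lam p hp (X + Y) = lam p hp X + lam p hp Y := by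
  ext i
  rw [lam_apply, AddMonoidAlgebra.coeff_add, Finsupp.add_apply, AddMonoidAlgebra.coeff_add,
    Finsupp.add_apply, lam_apply, lam_apply]

lemma substPow_mul (X Y : LaurentPolynomial R) :
    substPow p (X * Y) = substPow p X * substPow p Y := by
  have := AddMonoidAlgebra.mapDomain_mul (R := R) (AddMonoidHom.mulLeft (p:ℤ)) X Y
  exact this

lemma substPow_one : substPow p (1 : LaurentPolynomial R) = 1 := by
  have := AddMonoidAlgebra.mapDomain_one (R := R) (AddMonoidHom.mulLeft (p:ℤ))
  exact this

lemma substPow_pow (X : LaurentPolynomial R) (n : ℕ) :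
    substPow p (X ^ n) = substPow p X ^ n := by
  induction n with
  | zero => simpa using substPow_one (R := R) (p := p)
  | succ n ih => rw [pow_succ, substPow_mul, ih, pow_succ]

lemma lam_mul_substPow (hp : p ≠ 0) (A B : LaurentPolynomial R) :
    lam p hp (A * substPow p B) = lam p hp A * B := by
  classical
  set A₀ : LaurentPolynomial R :=
    AddMonoidAlgebra.ofCoeff (A.coeff.filter (fun i => (p:ℤ) ∣ i)) with hA₀
  set A₁ : LaurentPolynomial R :=
    AddMonoidAlgebra.ofCoeff (A.coeff.filter (fun i => ¬ (p:ℤ) ∣ i)) with hA₁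
  have hA : A₀ + A₁ = A := AddMonoidAlgebra.ext (Finsupp.filter_pos_add_filter_neg A.coeff _)
  have h0 : A₀ = substPow p (lam p hp A) := by
    ext i
    by_cases h : (p:ℤ) ∣ i
    · obtain ⟨j, rfl⟩ := h
      rw [substPow_apply_mul hp, lam_apply, hA₀, AddMonoidAlgebra.coeff_ofCoeff,
        Finsupp.filter_apply_pos _ _ ⟨j, rfl⟩]
    · rw [substPow_apply_notdvd _ h, hA₀, AddMonoidAlgebra.coeff_ofCoeff,
        Finsupp.filter_apply_neg _ _ h]
  have h1 : lam p hp (A₁ * substPow p B) = 0 := by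
    ext i
    rw [lam_apply]
    by_contra hne
    have hmem : ((p:ℤ) * i) ∈ (A₁ * substPow p B).coeff.support :=
      Finsupp.mem_support_iff.mpr (by simpa using hne)
    have := AddMonoidAlgebra.support_coeff_mul_subset A₁ (substPow p B) hmem
    rw [Finset.mem_add] at this
    obtain ⟨a, ha, b, hb, hab⟩ := this
    have ha' : ¬ (p:ℤ) ∣ a := by
      rw [hA₁, AddMonoidAlgebra.coeff_ofCoeff, Finsupp.support_filter, Finset.mem_filter] at ha
      exact ha.2
    have hb' : (p:ℤ) ∣ b := by
      rw [substPow, AddMonoidAlgebra.coeff_ofCoeff,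
        Finsupp.mapDomain_support_of_injective (pinj hp)] at hb
      obtain ⟨j, _, rfl⟩ := Finset.mem_image.mp hb
      exact ⟨j, rfl⟩
    apply ha'
    have h2 : (p:ℤ) ∣ a + b := hab ▸ ⟨i, rfl⟩
    exact (Int.dvd_add_right hb').mp (by rwa [add_comm] at h2)
  calc lam p hp (A * substPow p B)
      = lam p hp ((A₀ + A₁) * substPow p B) := by rw [hA]
    _ = lam p hp (substPow p (lam p hp A) * substPow p B)
          + lam p hp (A₁ * substPow p B) := by
          rw [add_mul, lam_add, h0]
    _ = lam p hp (substPow p (lam p hp A * B)) := by rw [h1, add_zero, substPow_mul]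
    _ = lam p hp A * B := lam_substPow hp _

end basics

section modp
variable {p : ℕ} [hF : Fact p.Prime]

noncomputable def phi (p : ℕ) [Fact p.Prime] :
    LaurentPolynomial ℤ →+* LaurentPolynomial (ZMod p) :=
  AddMonoidAlgebra.liftNCRingHom
    ((AddMonoidAlgebra.singleZeroRingHom : ZMod p →+* LaurentPolynomial (ZMod p)).comp
      (Int.castRingHom (ZMod p)))
    (AddMonoidAlgebra.of (ZMod p) ℤ) (fun _ _ => Commute.all _ _)

lemma phi_single (a : ℤ) (b : ℤ) :
    phi p (AddMonoidAlgebra.single a b) = AddMonoidAlgebra.single a ((b : ZMod p)) := by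
  show AddMonoidAlgebra.liftNC _ _ (AddMonoidAlgebra.single a b) = _
  rw [AddMonoidAlgebra.liftNC_single]
  show AddMonoidAlgebra.single 0 ((b : ZMod p)) * AddMonoidAlgebra.single a 1 = _
  rw [AddMonoidAlgebra.single_mul_single, zero_add, mul_one]

lemma phi_apply (X : LaurentPolynomial ℤ) (i : ℤ) :
    (phi p X).coeff i = ((X.coeff i : ℤ) : ZMod p) := by
  induction X using AddMonoidAlgebra.induction_linear with
  | zero => simp
  | add f g hf hg =>
      rw [map_add]
      show (phi p f).coeff i + (phi p g).coeff i = _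
      rw [hf, hg]
      show _ = ((f.coeff i + g.coeff i : ℤ) : ZMod p)
      push_cast
      ring
  | single a b =>
      rw [phi_single]
      rcases eq_or_ne i a with rfl | h
      · rw [AddMonoidAlgebra.coeff_single, Finsupp.single_eq_same]
        show _ = ((Finsupp.single i b i : ℤ) : ZMod p)
        rw [Finsupp.single_eq_same]
      · rw [AddMonoidAlgebra.coeff_single, Finsupp.single_eq_of_ne h]
        show _ = ((Finsupp.single a b i : ℤ) : ZMod p)
        rw [Finsupp.single_eq_of_ne h, Int.cast_zero]

instance charP_S : CharP (LaurentPolynomial (ZMod p)) p :=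
  charP_of_injective_ringHom
    (f := (AddMonoidAlgebra.singleZeroRingHom : ZMod p →+* LaurentPolynomial (ZMod p)))
    (fun _ _ h => AddMonoidAlgebra.single_right_injective h) p

lemma pow_p_eq_substPow (X : LaurentPolynomial (ZMod p)) :
    X ^ p = substPow p X := by
  haveI : ExpChar (LaurentPolynomial (ZMod p)) p := ExpChar.prime hF.out
  have : frobenius (LaurentPolynomial (ZMod p)) p X = substPow p X := by
    induction X using AddMonoidAlgebra.induction_linear with
    | zero => rw [map_zero]; ext i; simp [substPow, Finsupp.mapDomain_zero]
    | add f g hf hg =>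
        rw [map_add, hf, hg]
        apply AddMonoidAlgebra.ext
        show _ = Finsupp.mapDomain _ (f.coeff + g.coeff)
        rw [Finsupp.mapDomain_add]; rfl
    | single a b =>
        rw [frobenius_def]
        show AddMonoidAlgebra.single a b ^ p = _
        rw [AddMonoidAlgebra.single_pow, ZMod.pow_card, nsmul_eq_mul]
        show _ = AddMonoidAlgebra.ofCoeff
          (Finsupp.mapDomain (fun i : ℤ => (p:ℤ) * i) (Finsupp.single a b))
        rw [Finsupp.mapDomain_single]; rfl
  rw [← this, frobenius_def]

end modp

section key
variable {p : ℕ}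

lemma phi_lam [Fact p.Prime] (hp : p ≠ 0) (X : LaurentPolynomial ℤ) :
    phi p (lam p hp X) = lam p hp (phi p X) := by
  ext i
  rw [phi_apply, lam_apply, lam_apply, phi_apply]

lemma ct_lam {R : Type*} [Semiring R] (hp : p ≠ 0) (X : LaurentPolynomial R) :
    (lam p hp X).coeff 0 = X.coeff 0 := by
  rw [lam_apply, mul_zero]

lemma keyK (hp : p.Prime) (P R : LaurentPolynomial ℤ) (a b : ℕ) :
    (p:ℤ) ∣ ((P ^ (a + p*b) * R).coeff 0 - (P ^ b * lam p hp.ne_zero (P ^ a * R)).coeff 0) := by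
  haveI := Fact.mk hp
  rw [← ZMod.intCast_zmod_eq_zero_iff_dvd, Int.cast_sub, sub_eq_zero,
    ← phi_apply, ← phi_apply, map_mul, map_mul, map_pow, map_pow, phi_lam, map_mul, map_pow]
  set Pb := phi p P with hPb
  set Rb := phi p R with hRb
  have h1 : Pb ^ (a + p*b) * Rb = (Pb ^ a * Rb) * substPow p (Pb ^ b) := by
    rw [substPow_pow, ← pow_p_eq_substPow, ← pow_mul, pow_add]
    ring
  rw [h1, ← ct_lam hp.ne_zero ((Pb ^ a * Rb) * substPow p (Pb ^ b)),
    lam_mul_substPow, mul_comm]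

lemma ldeg_mul_le {R : Type*} [Semiring R] (X Y : LaurentPolynomial R) :
    ldeg (X * Y) ≤ ldeg X + ldeg Y := by
  classical
  apply Finset.sup_le
  intro i hi
  have h := AddMonoidAlgebra.support_coeff_mul_subset X Y hi
  rw [Finset.mem_add] at h
  obtain ⟨a, ha, b, hb, rfl⟩ := h
  calc (a + b).natAbs ≤ a.natAbs + b.natAbs := Int.natAbs_add_le a b
    _ ≤ ldeg X + ldeg Y := add_le_add (Finset.le_sup ha) (Finset.le_sup hb)

lemma ldeg_single_le {R : Type*} [Semiring R] (a : R) : ldeg (AddMonoidAlgebra.single 0 a) ≤ 0 := by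
  apply Finset.sup_le
  intro i hi
  rw [AddMonoidAlgebra.coeff_single] at hi
  have := Finsupp.support_single_subset hi
  simp only [Finset.mem_singleton] at this
  simp [this]

lemma ldeg_pow_le {R : Type*} [Semiring R] (X : LaurentPolynomial R) (n : ℕ) :
    ldeg (X ^ n) ≤ n * ldeg X := by
  induction n with
  | zero =>
      rw [pow_zero, zero_mul]
      have : (1 : LaurentPolynomial R) = AddMonoidAlgebra.single 0 1 := rfl
      rw [this]
      exact ldeg_single_le 1
  | succ n ih =>
      rw [pow_succ]
      calc ldeg (X ^ n * X) ≤ ldeg (X ^ n) + ldeg X := ldeg_mul_le _ _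
        _ ≤ n * ldeg X + ldeg X := Nat.add_le_add_right ih _
        _ = (n + 1) * ldeg X := by ring

lemma ldeg_lam_le {R : Type*} [Semiring R] (hp : p ≠ 0) (X : LaurentPolynomial R) :
    ldeg (lam p hp X) ≤ ldeg X / p := by
  apply Finset.sup_le
  intro i hi
  rw [Finsupp.mem_support_iff, lam_apply] at hi
  have h2 : ((p:ℤ) * i).natAbs ≤ ldeg X := Finset.le_sup (Finsupp.mem_support_iff.mpr hi)
  rw [Int.natAbs_mul, Int.natAbs_natCast] at h2
  rw [Nat.le_div_iff_mul_le (Nat.pos_of_ne_zero hp), mul_comm]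
  exact h2

lemma ldeg_step {D d : ℕ} (hp : p ≠ 0) (P X : LaurentPolynomial ℤ) (hP : ldeg P ≤ D + 1)
    (hd : d < p) (hX : ldeg X ≤ D) : ldeg (lam p hp (P ^ d * X)) ≤ D := by
  have h1 : ldeg (P ^ d * X) ≤ p * D + (p - 1) := by
    calc ldeg (P ^ d * X) ≤ ldeg (P ^ d) + ldeg X := ldeg_mul_le _ _
      _ ≤ d * ldeg P + D := add_le_add (ldeg_pow_le _ _) hX
      _ ≤ d * (D + 1) + D := Nat.add_le_add_right (Nat.mul_le_mul_left d hP) D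
      _ = (d + 1) * D + d := by ring
      _ ≤ p * D + (p - 1) := add_le_add (Nat.mul_le_mul_right D hd) (by omega)
  calc ldeg (lam p hp (P ^ d * X)) ≤ ldeg (P ^ d * X) / p := ldeg_lam_le hp _
    _ ≤ (p * D + (p - 1)) / p := Nat.div_le_div_right h1
    _ = D := by
        rw [Nat.mul_add_div (Nat.pos_of_ne_zero hp), Nat.div_eq_of_lt (by omega), add_zero]

lemma fold_deg {D : ℕ} (hp : p ≠ 0) (P : LaurentPolynomial ℤ) (hP : ldeg P ≤ D + 1) :
    ∀ (l : List ℕ), (∀ d ∈ l, d < p) → ∀ R : LaurentPolynomial ℤ, ldeg R ≤ D →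
      ldeg (List.foldl (fun R d => lam p hp (P ^ d * R)) R l) ≤ D := by
  intro l
  induction l with
  | nil => intro _ R hR; exact hR
  | cons d l ih =>
      intro hd R hR
      rw [List.foldl_cons]
      exact ih (fun e he => hd e (List.mem_cons_of_mem d he)) _
        (ldeg_step hp P R hP (hd d List.mem_cons_self) hR)

lemma fold_congr (hp : p.Prime) (P : LaurentPolynomial ℤ) :
    ∀ (l : List ℕ) (R : LaurentPolynomial ℤ) (m : ℕ),
      (p:ℤ) ∣ ((P ^ (Nat.ofDigits p l + p ^ l.length * m) * R).coeff 0 -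
        (P ^ m * List.foldl (fun R d => lam p hp.ne_zero (P ^ d * R)) R l).coeff 0) := by
  intro l
  induction l with
  | nil =>
      intro R m
      simp [Nat.ofDigits_nil]
  | cons d l ih =>
      intro R m
      have hE : Nat.ofDigits p (d :: l) + p ^ (d :: l).length * m
          = d + p * (Nat.ofDigits p l + p ^ l.length * m) := by
        rw [Nat.ofDigits_cons, List.length_cons, pow_succ]
        ring
      rw [hE, List.foldl_cons]
      have h1 := keyK hp P R d (Nat.ofDigits p l + p ^ l.length * m)
      have h2 := ih (lam p hp.ne_zero (P ^ d * R)) m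
      have := dvd_add h1 h2
      rwa [sub_add_sub_cancel] at this

lemma fold_replicate {R : Type*} [CommSemiring R] (hp : p ≠ 0) (P : LaurentPolynomial R)
    (s : ℕ) (X : LaurentPolynomial R) :
    List.foldl (fun R d => lam p hp (P ^ d * R)) X (List.replicate s 0) = (lam p hp)^[s] X := by
  induction s generalizing X with
  | zero => rfl
  | succ s ih =>
      rw [List.replicate_succ, List.foldl_cons, Function.iterate_succ_apply, pow_zero, one_mul]
      exact ih _

lemma ofDigits_replicate_zero (b s : ℕ) : Nat.ofDigits b (List.replicate s 0) = 0 := by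
  induction s with
  | zero => rfl
  | succ s ih => rw [List.replicate_succ, Nat.ofDigits_cons, ih]; simp

end key

/-- if `p ∣ ct(P^{n₀})` and `s` iterations of `Λ_p` collapse every Laurent
polynomial of degree at most `max(deg P − 1, deg Q)` to its constant term, then every `n`
whose base-`p` digit string (least significant first, allowing trailing zeros) contains the
block `0^s (n₀)_p 0^s` as a contiguous substring satisfies `p ∣ ct(P^n Q)`. -/
theorem stmt11 (p : ℕ) (hp : p.Prime) (P Q : LaurentPolynomial ℤ) (n₀ : ℕ)
    (hn₀ : (p : ℤ) ∣ (P ^ n₀).coeff 0) (s : ℕ)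
    (hs : ∀ R : LaurentPolynomial ℤ, ldeg R ≤ max (ldeg P - 1) (ldeg Q) →
      (lam p hp.ne_zero)^[s] R = LaurentPolynomial.C (R.coeff 0)) :
    ∀ n : ℕ,
      (∃ k : ℕ,
        (List.replicate s 0 ++ Nat.digits p n₀ ++ List.replicate s 0) <:+:
          (Nat.digits p n ++ List.replicate k 0)) →
      (p : ℤ) ∣ (P ^ n * Q).coeff 0 := by
  haveI := Fact.mk hp
  intro n h
  obtain ⟨k, u, v, huv⟩ := h
  set D := max (ldeg P - 1) (ldeg Q) with hD
  have hP1 : ldeg P ≤ D + 1 := by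
    have := le_max_left (ldeg P - 1) (ldeg Q); omega
  have hQD : ldeg Q ≤ D := le_max_right _ _
  set f : LaurentPolynomial ℤ → ℕ → LaurentPolynomial ℤ :=
    fun R d => lam p hp.ne_zero (P ^ d * R) with hf
  set B := List.replicate s 0 ++ Nat.digits p n₀ ++ List.replicate s 0 with hB
  set t := (Nat.digits p n₀).length with ht
  set m := Nat.ofDigits p v with hm
  set M₂ := n₀ + p ^ t * (p ^ s * m) with hM₂
  -- digit bounds
  have hu : ∀ d ∈ u, d < p := by
    intro d hd
    have : d ∈ Nat.digits p n ++ List.replicate k 0 := by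
      rw [← huv]
      simp [hd]
    rcases List.mem_append.mp this with h' | h'
    · exact Nat.digits_lt_base hp.one_lt h'
    · rw [List.eq_of_mem_replicate h']
      exact hp.pos
  have hd0 : ∀ d ∈ Nat.digits p n₀, d < p := fun d hd => Nat.digits_lt_base hp.one_lt hd
  -- decomposition of n
  have h0 : Nat.ofDigits p (u ++ (B ++ v)) = n := by
    rw [← List.append_assoc, huv, Nat.ofDigits_append, Nat.ofDigits_digits,
      ofDigits_replicate_zero, mul_zero, add_zero]
  have hBv : Nat.ofDigits p (B ++ v) = p ^ s * M₂ := by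
    have hassoc : B ++ v
        = List.replicate s 0 ++ (Nat.digits p n₀ ++ (List.replicate s 0 ++ v)) := by
      simp [hB, List.append_assoc]
    rw [hassoc, Nat.ofDigits_append, Nat.ofDigits_append, Nat.ofDigits_append,
      ofDigits_replicate_zero, Nat.ofDigits_digits,
      List.length_replicate, hM₂, ← ht, ← hm]
    ring
  have hn : n = Nat.ofDigits p u + p ^ u.length * (p ^ s * M₂) := by
    rw [← hBv, ← Nat.ofDigits_append, h0]
  -- states
  set R₁ := List.foldl f Q u with hR₁
  set c₁ := R₁.coeff 0 with hc₁
  set R₂ := List.foldl f (LaurentPolynomial.C c₁) (Nat.digits p n₀) with hR₂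
  set c₂ := R₂.coeff 0 with hc₂
  have hR₁D : ldeg R₁ ≤ D := fold_deg hp.ne_zero P hP1 u hu Q hQD
  have hCD : ldeg (LaurentPolynomial.C c₁) ≤ D := by
    rw [← LaurentPolynomial.single_eq_C]
    exact le_trans (ldeg_single_le c₁) (Nat.zero_le D)
  have hR₂D : ldeg R₂ ≤ D := fold_deg hp.ne_zero P hP1 _ hd0 _ hCD
  have hiter₁ : (lam p hp.ne_zero)^[s] R₁ = LaurentPolynomial.C c₁ := hs R₁ hR₁D
  have hiter₂ : (lam p hp.ne_zero)^[s] R₂ = LaurentPolynomial.C c₂ := hs R₂ hR₂D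
  -- chain of congruences
  have d₁ : (p:ℤ) ∣ (P ^ n * Q).coeff 0 - (P ^ (p ^ s * M₂) * R₁).coeff 0 := by
    have := fold_congr hp P u Q (p ^ s * M₂)
    rwa [← hn] at this
  have d₂ : (p:ℤ) ∣ (P ^ (p ^ s * M₂) * R₁).coeff 0 - (P ^ M₂ * LaurentPolynomial.C c₁).coeff 0 := by
    have := fold_congr hp P (List.replicate s 0) R₁ M₂
    rwa [fold_replicate, hiter₁, ofDigits_replicate_zero, List.length_replicate,
      zero_add] at this
  have d₃ : (p:ℤ) ∣ (P ^ M₂ * LaurentPolynomial.C c₁).coeff 0 - (P ^ (p ^ s * m) * R₂).coeff 0 := by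
    have := fold_congr hp P (Nat.digits p n₀) (LaurentPolynomial.C c₁) (p ^ s * m)
    rwa [Nat.ofDigits_digits, ← ht, ← hM₂] at this
  have d₄ : (p:ℤ) ∣ (P ^ (p ^ s * m) * R₂).coeff 0 - (P ^ m * LaurentPolynomial.C c₂).coeff 0 := by
    have := fold_congr hp P (List.replicate s 0) R₂ m
    rwa [fold_replicate, hiter₂, ofDigits_replicate_zero, List.length_replicate,
      zero_add] at this
  have d₅ : (p:ℤ) ∣ (P ^ m * LaurentPolynomial.C c₂).coeff 0 := by
    have h5 := fold_congr hp P (Nat.digits p n₀) (LaurentPolynomial.C c₁) 0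
    rw [Nat.ofDigits_digits, mul_zero, add_zero, pow_zero, one_mul] at h5
    have h6 : (p:ℤ) ∣ (P ^ n₀ * LaurentPolynomial.C c₁).coeff 0 := by
      rw [← LaurentPolynomial.single_eq_C, AddMonoidAlgebra.coeff_mul_single_zero]
      exact Dvd.dvd.mul_right hn₀ c₁
    have h7 : (p:ℤ) ∣ c₂ := by
      have := dvd_sub h6 h5
      rwa [sub_sub_cancel] at this
    rw [← LaurentPolynomial.single_eq_C, AddMonoidAlgebra.coeff_mul_single_zero]
    exact Dvd.dvd.mul_left h7 _
  have e : (P ^ n * Q).coeff 0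
      = ((P ^ n * Q).coeff 0 - (P ^ (p ^ s * M₂) * R₁).coeff 0)
      + ((P ^ (p ^ s * M₂) * R₁).coeff 0 - (P ^ M₂ * LaurentPolynomial.C c₁).coeff 0)
      + ((P ^ M₂ * LaurentPolynomial.C c₁).coeff 0 - (P ^ (p ^ s * m) * R₂).coeff 0)
      + ((P ^ (p ^ s * m) * R₂).coeff 0 - (P ^ m * LaurentPolynomial.C c₂).coeff 0)
      + (P ^ m * LaurentPolynomial.C c₂).coeff 0 := by ring
  rw [e]
  exact dvd_add (dvd_add (dvd_add (dvd_add d₁ d₂) d₃) d₄) d₅
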